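/- arXiv:math/0505446 — 8 statements merged into one kernel-verified Lean document; each statement's English description precedes it below -/
import Mathlib

section
/- Let X be a compact Hausdorff space, α : X → X continuous, and λ : C(X) → ℝ a dynamical potential (monotone, additively homogeneous, convex, and strongly α-invariant in the sense that λ(φ + ψ) = λ(φ + ψ∘α) for all φ, ψ ∈ C(X)). Define the dual entropy S(μ) = inf_{φ ∈ C(X)} (λ(φ) − μ(φ)) for continuous linear functionals μ on C(X). If S(μ) > −∞, then μ is a positive functional with μ(1) = 1 (i.e., a probability measure), and μ is α-invariant: μ(φ∘α) = μ(φ) for all φ ∈ C(X). -/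
/-- If the dual entropy `S(μ) = inf_φ (λ(φ) - μ(φ))` of a dynamical potential is finite
(bounded below), then μ is a positive normalized (probability) functional that is
α-invariant. -/
theorem stmt_1 {X : Type*} [TopologicalSpace X] [CompactSpace X] [T2Space X]
    (α : C(X, X))
    (lam : C(X, ℝ) → ℝ)
    (hmono : ∀ φ ψ : C(X, ℝ), φ ≤ ψ → lam φ ≤ lam ψ)
    (hhom : ∀ (φ : C(X, ℝ)) (t : ℝ), lam (φ + ContinuousMap.const X t) = lam φ + t)
    (hconv : ConvexOn ℝ Set.univ lam)
    (hinv : ∀ φ ψ : C(X, ℝ), lam (φ + ψ) = lam (φ + ψ.comp α))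
    (μ : C(X, ℝ) →L[ℝ] ℝ)
    (hS : ∃ c : ℝ, ∀ φ : C(X, ℝ), c ≤ lam φ - μ φ) :
    (∀ φ : C(X, ℝ), 0 ≤ φ → 0 ≤ μ φ) ∧ μ 1 = 1 ∧
      (∀ φ : C(X, ℝ), μ (φ.comp α) = μ φ) := by
  obtain ⟨c, hc⟩ := hS
  -- helper: if t * a ≤ lam 0 - c for all t, then a = 0
  have cancel : ∀ a : ℝ, (∀ t : ℝ, t * a ≤ lam 0 - c) → a = 0 := by
    intro a ha
    by_contra h
    have := ha ((lam 0 - c + 1) / a)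
    rw [div_mul_cancel₀ _ h] at this
    linarith
  refine ⟨?_, ?_, ?_⟩
  · -- positivity
    intro φ hφ
    by_contra h
    push_neg at h
    set t : ℝ := (lam 0 - c + 1) / (-μ φ) with ht
    have htpos : 0 < t := div_pos (by
      have := hc 0
      have h0 : μ (0 : C(X, ℝ)) = 0 := map_zero μ
      linarith) (by linarith)
    have hne : -μ φ ≠ 0 := by linarith
    have hle : (-t) • φ ≤ 0 := by
      intro x
      show -t * φ x ≤ 0
      have hx : (0 : ℝ) ≤ φ x := hφ x
      nlinarith
    have h1 : lam ((-t) • φ) ≤ lam 0 := hmono _ _ hle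
    have h2 := hc ((-t) • φ)
    have h3 : μ ((-t) • φ) = -t * μ φ := by
      rw [map_smul]; simp [smul_eq_mul]
    rw [h3] at h2
    have h4 : t * (-μ φ) = lam 0 - c + 1 := by
      rw [ht]; exact div_mul_cancel₀ _ hne
    have h5 : -t * μ φ = t * (-μ φ) := by ring
    linarith
  · -- normalization
    have key : ∀ t : ℝ, t * (μ 1 - 1) ≤ lam 0 - c := by
      intro t
      have h1 : lam (0 + ContinuousMap.const X t) = lam 0 + t := hhom 0 t
      have h2 := hc (0 + ContinuousMap.const X t)
      have heq : (0 + ContinuousMap.const X t : C(X, ℝ)) = t • 1 := by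
        ext x; simp
      rw [heq] at h1 h2
      have h3 : μ (t • (1 : C(X, ℝ))) = t * μ 1 := by
        rw [map_smul]; simp [smul_eq_mul]
      rw [h3] at h2
      nlinarith
    have := cancel _ key
    linarith
  · -- invariance
    intro ψ
    have key : ∀ t : ℝ, t * (μ ψ - μ (ψ.comp α)) ≤ lam 0 - c := by
      intro t
      have h1 := hinv (-((t • ψ).comp α)) (t • ψ)
      have heq : -((t • ψ).comp α) + (t • ψ).comp α = (0 : C(X, ℝ)) := by
        ext x; simp
      rw [heq] at h1
      have h2 := hc (-((t • ψ).comp α) + t • ψ)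
      have h3 : μ (-((t • ψ).comp α) + t • ψ) = t * (μ ψ - μ (ψ.comp α)) := by
        have hcomp : (t • ψ).comp α = t • (ψ.comp α) := by ext x; simp
        rw [map_add, map_neg, hcomp, map_smul, map_smul]
        simp [smul_eq_mul]; ring
      rw [h3] at h2
      linarith
    have := cancel _ key
    linarith
end

section
/- Let λ : C(X) → ℝ be a convex functional satisfying the Lipschitz condition with constant 1 (in sup norm), and let μ ∈ C*(X) satisfy inf_{φ}(λ(φ) − μ(φ)) > −∞. Then μ lies in the norm closure (in C*(X)) of the set of all subgradients of λ. -/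
/-!
Fix `ε > 0`. Ekeland's variational principle, applied to the lower-bounded function `λ - μ`, gives
a point `φ` with `(λ - μ) φ ≤ (λ - μ) (φ + ψ) + (ε / 2) ‖ψ‖` for all `ψ`. So the convex function
`p ψ = λ (φ + ψ) - λ φ - μ ψ` stays above the concave cone `-(ε / 2) ‖ψ‖`, and separating the
epigraph of `p` from the open region below that cone (Hahn–Banach) yields a functional `g` with
`g ≤ p` and `‖g‖ ≤ ε / 2`. Then `μ + g` is a subgradient of `λ` at `φ` within `ε / 2` of `μ`.
-/

open Filter Set

section Ekeland

variable {α : Type*} [MetricSpace α] {f : α → ℝ} {δ : ℝ}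

def ekelandSet (f : α → ℝ) (δ : ℝ) (x : α) : Set α := {y | f y + δ * dist y x ≤ f x}

lemma self_mem_ekelandSet (x : α) : x ∈ ekelandSet f δ x := by simp [ekelandSet]

lemma ekelandSet_subset (hδ : 0 ≤ δ) {x y : α} (hy : y ∈ ekelandSet f δ x) :
    ekelandSet f δ y ⊆ ekelandSet f δ x := fun z hz => by
  simp only [ekelandSet, mem_ofPred_eq] at hy hz ⊢
  nlinarith [dist_triangle z y x]

lemma LowerSemicontinuous.isClosed_ekelandSet (hf : LowerSemicontinuous f) (x : α) :
    IsClosed (ekelandSet f δ x) :=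
  (hf.add (continuous_const.mul (continuous_id.dist continuous_const)).lowerSemicontinuous)
    |>.isClosed_preimage (f x)

lemma exists_mem_ekelandSet_forall_lt_add (hbdd : BddBelow (range f)) (x : α) {ε : ℝ}
    (hε : 0 < ε) : ∃ y ∈ ekelandSet f δ x, ∀ z ∈ ekelandSet f δ x, f y < f z + ε := by
  have hne : (f '' ekelandSet f δ x).Nonempty := ⟨f x, x, self_mem_ekelandSet x, rfl⟩
  obtain ⟨_, ⟨y, hy, rfl⟩, hlt⟩ := Real.lt_sInf_add_pos hne hε
  refine ⟨y, hy, fun z hz => hlt.trans_le ?_⟩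
  gcongr
  exact csInf_le (hbdd.mono (image_subset_range f _)) (mem_image_of_mem f hz)

/-- **Ekeland's variational principle** (weak form). -/
theorem LowerSemicontinuous.exists_forall_le_add_mul_dist [CompleteSpace α] [Nonempty α]
    (hf : LowerSemicontinuous f) (hbdd : BddBelow (range f)) (hδ : 0 < δ) :
    ∃ x₀, ∀ y, f x₀ ≤ f y + δ * dist y x₀ := by
  choose next hnext_mem hnext_lt using
    fun (x : α) (n : ℕ) => exists_mem_ekelandSet_forall_lt_add (δ := δ) hbdd x
      (pow_pos (one_half_pos (α := ℝ)) n)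
  let u : ℕ → α := fun n => Nat.rec (Classical.arbitrary α) (fun k x => next x k) n
  have hu_anti : Antitone (fun n => ekelandSet f δ (u n)) :=
    antitone_nat_of_succ_le fun n => ekelandSet_subset hδ.le (hnext_mem (u n) n)
  have hsmall : ∀ n, ∀ z ∈ ekelandSet f δ (u (n + 1)), dist z (u (n + 1)) ≤ (1 / 2) ^ n / δ := by
    intro n z hz
    have hlt : f (u (n + 1)) < f z + (1 / 2) ^ n := hnext_lt (u n) n z (hu_anti n.le_succ hz)
    simp only [ekelandSet, mem_ofPred_eq] at hz
    rw [le_div_iff₀ hδ]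
    linarith
  have hcauchy : CauchySeq (fun n => u (n + 1)) :=
    cauchySeq_of_le_geometric_two (C := 2 / δ) fun n => by
      rw [dist_comm, show 2 / δ / 2 / 2 ^ n = (1 / 2) ^ n / δ by rw [one_div_pow]; ring]
      exact hsmall n _ (hnext_mem _ _)
  obtain ⟨x₀, hx₀⟩ := cauchySeq_tendsto_of_complete hcauchy
  have hx₀_mem : ∀ n, x₀ ∈ ekelandSet f δ (u (n + 1)) := fun n =>
    (hf.isClosed_ekelandSet _).mem_of_tendsto hx₀ <|
      eventually_atTop.2 ⟨n, fun m hm => hu_anti (Nat.succ_le_succ hm) (self_mem_ekelandSet _)⟩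
  refine ⟨x₀, fun y => not_lt.1 fun hy => ?_⟩
  have hy_mem : ∀ n, y ∈ ekelandSet f δ (u (n + 1)) := fun n =>
    ekelandSet_subset hδ.le (hx₀_mem n) hy.le
  have : y = x₀ := eq_of_forall_dist_le fun ε hε => by
    obtain ⟨n, hn⟩ := exists_pow_lt_of_lt_one (by positivity : 0 < ε * δ / 2) one_half_lt_one
    calc dist y x₀ ≤ dist y (u (n + 1)) + dist x₀ (u (n + 1)) := dist_triangle_right _ _ _
      _ ≤ 2 * ((1 / 2) ^ n / δ) := by linarith [hsmall n y (hy_mem n), hsmall n x₀ (hx₀_mem n)]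
      _ ≤ ε := by rw [← mul_div_assoc, div_le_iff₀ hδ]; linarith
  subst this
  simp at hy

end Ekeland

theorem ConvexOn.exists_strongDual_le_of_neg_mul_norm_le {E : Type*} [NormedAddCommGroup E]
    [NormedSpace ℝ E] {p : E → ℝ} (hp : ConvexOn ℝ univ p) (hp0 : p 0 = 0) {δ : ℝ} (hδ : 0 ≤ δ)
    (hlow : ∀ x, -(δ * ‖x‖) ≤ p x) : ∃ g : StrongDual ℝ E, ‖g‖ ≤ δ ∧ ∀ x, g x ≤ p x := by
  have hcone : ConcaveOn ℝ univ fun x : E => -(δ * ‖x‖) :=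
    ((convexOn_norm convex_univ).smul hδ).neg
  have hcone_open : IsOpen {z : E × ℝ | z.1 ∈ univ ∧ z.2 < -(δ * ‖z.1‖)} := by
    simp only [mem_univ, true_and]
    exact isOpen_lt continuous_snd (by fun_prop)
  obtain ⟨F, u, hF_cone, hF_epi⟩ := geometric_hahn_banach_open hcone.convex_strict_hypograph
    hcone_open hp.convex_epigraph <|
      disjoint_left.2 fun z hz hz' => (hz.2.trans_le (hlow _)).not_ge hz'.2
  set α := F (0, 1)
  have hF : ∀ x t, F (x, t) = F (x, 0) + t * α := fun x t => by
    rw [← smul_eq_mul, ← map_smul, ← map_add]; simp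
  have hu_nonpos : u ≤ 0 := by simpa [Prod.mk_zero_zero] using hF_epi (0, 0) ⟨mem_univ _, hp0.le⟩
  have hα : 0 < α := by
    have := hF_cone (0, -1) ⟨mem_univ _, by simp⟩
    rw [hF] at this
    simp only [Prod.mk_zero_zero, map_zero, neg_mul, one_mul, zero_add] at this
    linarith
  have hF_lt : ∀ x, ∀ ε > 0, F (x, 0) - α * δ * ‖x‖ - ε < u := fun x ε hε => by
    have := hF_cone (x, -(δ * ‖x‖) - ε / α) ⟨mem_univ _, by simp only [sub_lt_self_iff]; positivity⟩
    rw [hF, sub_mul, div_mul_cancel₀ _ hα.ne'] at this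
    linarith
  have hu_nonneg : 0 ≤ u := le_of_forall_pos_lt_add fun ε hε => by
    linarith [show -ε < u by simpa [Prod.mk_zero_zero] using hF_lt 0 ε hε]
  have hF_le : ∀ x, F (x, 0) ≤ α * δ * ‖x‖ := fun x =>
    le_of_forall_pos_lt_add fun ε hε => by linarith [hF_lt x ε hε]
  -- `u = 0` and `α > 0`, so the separating hyperplane `F = 0` is the graph of `g`
  let g : StrongDual ℝ E := -α⁻¹ • F.comp (.inl ℝ E ℝ)
  have hg : ∀ x, g x * α = -F (x, 0) := fun x => by
    simp only [g, smul_apply, ContinuousLinearMap.comp_apply,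
      ContinuousLinearMap.inl_apply, smul_eq_mul]
    field_simp
  refine ⟨g, ContinuousLinearMap.opNorm_le_bound _ hδ fun x => ?_, fun x => ?_⟩
  · have hneg : -F (x, 0) ≤ α * δ * ‖x‖ := by
      simpa [← map_neg] using hF_le (-x)
    rw [Real.norm_eq_abs, abs_le]
    constructor <;> rw [← mul_le_mul_iff_of_pos_right hα, hg] <;>
      linarith [hF_le x]
  · have := hF_epi (x, p x) ⟨mem_univ _, le_rfl⟩
    rw [hF] at this
    rw [← mul_le_mul_iff_of_pos_right hα, hg]
    linarith

theorem ConvexOn.mem_closure_setOf_subgradient {E : Type*} [NormedAddCommGroup E]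
    [NormedSpace ℝ E] [CompleteSpace E] {f : E → ℝ} (hf : ConvexOn ℝ univ f)
    (hf_lsc : LowerSemicontinuous f) (μ : StrongDual ℝ E)
    (hbdd : BddBelow (range fun x => f x - μ x)) :
    μ ∈ closure {m : StrongDual ℝ E | ∃ x, ∀ y, m y ≤ f (x + y) - f x} := by
  refine Metric.mem_closure_iff.2 fun ε hε => ?_
  have hf_sub_lsc : LowerSemicontinuous fun x => f x - μ x := by
    simpa only [sub_eq_add_neg, neg_apply] using hf_lsc.add (-μ).continuous.lowerSemicontinuous
  obtain ⟨x₀, hx₀⟩ := hf_sub_lsc.exists_forall_le_add_mul_dist hbdd (half_pos hε)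
  have hp : ConvexOn ℝ univ fun y => f (x₀ + y) - μ y - f x₀ :=
    ((hf.translate_right x₀).sub ((μ : E →ₗ[ℝ] ℝ).concaveOn convex_univ)).add_const (-f x₀)
  obtain ⟨g, hg_norm, hg_le⟩ := hp.exists_strongDual_le_of_neg_mul_norm_le (by simp)
    (half_pos hε).le fun y => by
      have := hx₀ (x₀ + y)
      simp only [map_add, dist_self_add_left] at this
      linarith
  refine ⟨μ + g, ⟨x₀, fun y => ?_⟩, ?_⟩
  · have := hg_le y
    simp only [add_apply]
    linarith
  · rw [dist_self_add_right]
    linarith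

theorem stmt_3_general {X : Type*} [TopologicalSpace X] [CompactSpace X]
    (lam : C(X, ℝ) → ℝ)
    (hconv : ConvexOn ℝ Set.univ lam)
    (hlip : ∀ φ ψ : C(X, ℝ), |lam φ - lam ψ| ≤ ‖φ - ψ‖)
    (μ : C(X, ℝ) →L[ℝ] ℝ)
    (hbdd : ∃ c : ℝ, ∀ φ : C(X, ℝ), c ≤ lam φ - μ φ) :
    μ ∈ closure {m : C(X, ℝ) →L[ℝ] ℝ |
      ∃ φ : C(X, ℝ), ∀ ψ : C(X, ℝ), m ψ ≤ lam (φ + ψ) - lam φ} := by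
  have hlam : LipschitzWith 1 lam :=
    .of_dist_le_mul fun φ ψ => by simpa [Real.dist_eq, dist_eq_norm] using hlip φ ψ
  obtain ⟨c, hc⟩ := hbdd
  exact hconv.mem_closure_setOf_subgradient hlam.continuous.lowerSemicontinuous μ
    ⟨c, forall_mem_range.2 hc⟩

/-- Bishop–Phelps application: if λ is a convex, 1-Lipschitz functional on C(X) and
`inf_φ (λ(φ) - μ(φ)) > -∞`, then μ lies in the norm closure of the set of all
subgradients of λ. -/
theorem stmt_3 {X : Type*} [TopologicalSpace X] [CompactSpace X] [T2Space X]
    (lam : C(X, ℝ) → ℝ)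
    (hconv : ConvexOn ℝ Set.univ lam)
    (hlip : ∀ φ ψ : C(X, ℝ), |lam φ - lam ψ| ≤ ‖φ - ψ‖)
    (μ : C(X, ℝ) →L[ℝ] ℝ)
    (hbdd : ∃ c : ℝ, ∀ φ : C(X, ℝ), c ≤ lam φ - μ φ) :
    μ ∈ closure {m : C(X, ℝ) →L[ℝ] ℝ |
      ∃ φ : C(X, ℝ), ∀ ψ : C(X, ℝ), m ψ ≤ lam (φ + ψ) - lam φ} :=
  stmt_3_general lam hconv hlip μ hbdd
end

section
/- For every real x and every natural number n ≥ 1, x² = 4^{−n} Σ_{i=−n}^{n} (i²/n²) C(2n, n+i) (1+x)^{n+i} (1−x)^{n−i} − (1−x²)/(2n), where C(2n, n+i) is the binomial coefficient. -/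
open Finset Polynomial

lemma beval (m k : ℕ) (p : ℝ) :
    (bernsteinPolynomial ℝ m k).eval p = (m.choose k : ℝ) * p ^ k * (1 - p) ^ (m - k) := by
  simp [bernsteinPolynomial]

lemma bsum0 (m : ℕ) (p : ℝ) :
    ∑ k ∈ range (m + 1), (m.choose k : ℝ) * p ^ k * (1 - p) ^ (m - k) = 1 := by
  have := congrArg (Polynomial.eval p) (bernsteinPolynomial.sum ℝ m)
  simpa [eval_finset_sum, beval] using this

lemma bsum1 (m : ℕ) (p : ℝ) :
    ∑ k ∈ range (m + 1), (k : ℝ) * ((m.choose k : ℝ) * p ^ k * (1 - p) ^ (m - k)) = m * p := by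
  have := congrArg (Polynomial.eval p) (bernsteinPolynomial.sum_smul ℝ m)
  simpa [eval_finset_sum, beval, mul_assoc] using this

lemma bsum2 (m : ℕ) (p : ℝ) :
    ∑ k ∈ range (m + 1), ((k : ℝ) * ((k : ℝ) - 1)) * ((m.choose k : ℝ) * p ^ k * (1 - p) ^ (m - k))
      = (m : ℝ) * ((m : ℝ) - 1) * p ^ 2 := by
  have := congrArg (Polynomial.eval p) (bernsteinPolynomial.sum_mul_smul ℝ m)
  have cast : ∀ k : ℕ, ((k * (k - 1) : ℕ) : ℝ) = (k : ℝ) * ((k : ℝ) - 1) := by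
    rintro (_ | k) <;> push_cast <;> ring
  rw [eval_finset_sum] at this
  simp only [eval_smul, beval, smul_eq_mul, nsmul_eq_mul, cast, eval_pow, eval_X, eval_mul, eval_natCast] at this
  rw [this]


lemma key (n : ℕ) (p : ℝ) :
    ∑ k ∈ range (2 * n + 1), ((k : ℝ) - n) ^ 2 *
        ((2 * n).choose k : ℝ) * p ^ k * (1 - p) ^ (2 * n - k)
      = (n : ℝ) ^ 2 * (2 * p - 1) ^ 2 + 2 * n * p * (1 - p) := by
  have h : ∀ k ∈ range (2 * n + 1),
      ((k : ℝ) - n) ^ 2 * ((2 * n).choose k : ℝ) * p ^ k * (1 - p) ^ (2 * n - k)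
        = ((k : ℝ) * ((k : ℝ) - 1)) * (((2 * n).choose k : ℝ) * p ^ k * (1 - p) ^ (2 * n - k))
          + (1 - 2 * n) * ((k : ℝ) * (((2 * n).choose k : ℝ) * p ^ k * (1 - p) ^ (2 * n - k)))
          + (n : ℝ) ^ 2 * (((2 * n).choose k : ℝ) * p ^ k * (1 - p) ^ (2 * n - k)) := by
    intro k _; ring
  rw [Finset.sum_congr rfl h, Finset.sum_add_distrib, Finset.sum_add_distrib,
    ← Finset.mul_sum, ← Finset.mul_sum, bsum2, bsum1, bsum0]
  push_cast
  ring

/-- The binomial identity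
`x² = 4^{-n} Σ_{i=-n}^n (i²/n²) C(2n, n+i) (1+x)^{n+i} (1-x)^{n-i} - (1-x²)/(2n)`. -/
theorem stmt_4 (x : ℝ) (n : ℕ) (hn : 1 ≤ n) :
    x ^ 2 =
      (∑ i ∈ Finset.Icc (-(n : ℤ)) (n : ℤ),
          ((i : ℝ) ^ 2 / (n : ℝ) ^ 2) * (Nat.choose (2 * n) ((n : ℤ) + i).toNat : ℝ) *
            (1 + x) ^ ((n : ℤ) + i).toNat * (1 - x) ^ ((n : ℤ) - i).toNat) / 4 ^ n
        - (1 - x ^ 2) / (2 * n) := by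
  have hn' : (n : ℝ) ≠ 0 := Nat.cast_ne_zero.mpr (by omega)
  have hre : (∑ i ∈ Finset.Icc (-(n : ℤ)) (n : ℤ),
          ((i : ℝ) ^ 2 / (n : ℝ) ^ 2) * (Nat.choose (2 * n) ((n : ℤ) + i).toNat : ℝ) *
            (1 + x) ^ ((n : ℤ) + i).toNat * (1 - x) ^ ((n : ℤ) - i).toNat)
      = ∑ k ∈ range (2 * n + 1),
          (((k : ℝ) - n) ^ 2 / (n : ℝ) ^ 2) * ((2 * n).choose k : ℝ) *
            (1 + x) ^ k * (1 - x) ^ (2 * n - k) := by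
    refine Finset.sum_nbij' (fun i => ((n : ℤ) + i).toNat) (fun k => (k : ℤ) - n)
      ?_ ?_ ?_ ?_ ?_
    · intro i hi; simp only [Finset.mem_Icc] at hi; simp only [Finset.mem_range]; omega
    · intro k hk; simp only [Finset.mem_range] at hk; simp only [Finset.mem_Icc]; omega
    · intro i hi; simp only [Finset.mem_Icc] at hi; omega
    · intro k hk; simp only [Finset.mem_range] at hk; omega
    · intro i hi
      simp only [Finset.mem_Icc] at hi
      have h1 : (((n : ℤ) + i).toNat : ℤ) = (n : ℤ) + i := by omega
      have h2 : (n : ℤ) - i = (2 * n : ℕ) - (((n : ℤ) + i).toNat : ℤ) := by omega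
      have h3 : ((n : ℤ) - i).toNat = 2 * n - ((n : ℤ) + i).toNat := by omega
      have h4 : ((((n : ℤ) + i).toNat : ℝ) - n) = (i : ℝ) := by
        have := congrArg (fun z : ℤ => (z : ℝ)) h1
        push_cast at this; linarith
      rw [h3, h4]
  rw [hre]
  have hterm : ∀ k ∈ range (2 * n + 1),
      (((k : ℝ) - n) ^ 2 / (n : ℝ) ^ 2) * ((2 * n).choose k : ℝ) *
          (1 + x) ^ k * (1 - x) ^ (2 * n - k)
        = (1 / (n : ℝ) ^ 2) * (4 : ℝ) ^ n *
            (((k : ℝ) - n) ^ 2 * ((2 * n).choose k : ℝ) *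
              ((1 + x) / 2) ^ k * ((1 - x) / 2) ^ (2 * n - k)) := by
    intro k hk
    simp only [Finset.mem_range] at hk
    have h4 : (4 : ℝ) ^ n = 2 ^ k * 2 ^ (2 * n - k) := by
      rw [← pow_add]
      have : k + (2 * n - k) = 2 * n := by omega
      rw [this]; rw [show (4:ℝ) = 2^2 by norm_num, ← pow_mul]
    rw [div_pow, div_pow, h4]
    have h2k : (2 : ℝ) ^ k ≠ 0 := by positivity
    have h2k' : (2 : ℝ) ^ (2 * n - k) ≠ 0 := by positivity
    field_simp
  rw [Finset.sum_congr rfl hterm, ← Finset.mul_sum]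
  have hq : ((1 - x) / 2 : ℝ) = 1 - (1 + x) / 2 := by ring
  rw [hq, key n ((1 + x) / 2)]
  have h4n : (4 : ℝ) ^ n ≠ 0 := by positivity
  field_simp
  ring
end

section
/- Let 𝒞 be a commutative semiordered real algebra with positive cone 𝒞₊, containing a positive unit I, such that every element is bounded (for each a there is t > 0 with −tI ≤ a ≤ tI) and the intersection of 𝒞₊ with every affine line is closed. Then for every b ∈ 𝒞, the square b² belongs to 𝒞₊. -/
open Polynomial Finset

lemma bern_id (n : ℕ) :
    ∑ ν ∈ Finset.range (n + 1), (((2 * ν : ℝ) - n) ^ 2) • bernsteinPolynomial ℝ n ν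
      = ((n : ℝ) ^ 2) • ((2 : ℝ[X]) * X - 1) ^ 2 + ((4 * n : ℝ)) • (X * (1 - X)) := by
  have h0 := bernsteinPolynomial.sum ℝ n
  have h1 := bernsteinPolynomial.sum_smul ℝ n
  have h2 := bernsteinPolynomial.sum_mul_smul ℝ n
  have step : ∀ ν : ℕ, (((2 * ν : ℝ) - n) ^ 2) • bernsteinPolynomial ℝ n ν
      = (4 : ℝ) • (((ν * (ν - 1) : ℕ) : ℝ) • bernsteinPolynomial ℝ n ν)
        + ((4 : ℝ) - 4 * n) • (((ν : ℕ) : ℝ) • bernsteinPolynomial ℝ n ν)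
        + ((n : ℝ) ^ 2) • bernsteinPolynomial ℝ n ν := by
    intro ν
    rw [smul_smul, smul_smul, ← add_smul, ← add_smul]
    congr 1
    rcases ν with _ | μ
    · push_cast; ring
    · push_cast [Nat.succ_sub_one]; ring
  calc ∑ ν ∈ Finset.range (n + 1), (((2 * ν : ℝ) - n) ^ 2) • bernsteinPolynomial ℝ n ν
      = (4 : ℝ) • (∑ ν ∈ Finset.range (n + 1), (ν * (ν - 1)) • bernsteinPolynomial ℝ n ν)
        + ((4 : ℝ) - 4 * n) • (∑ ν ∈ Finset.range (n + 1), ν • bernsteinPolynomial ℝ n ν)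
        + ((n : ℝ) ^ 2) • (∑ ν ∈ Finset.range (n + 1), bernsteinPolynomial ℝ n ν) := by
        rw [Finset.smul_sum, Finset.smul_sum, Finset.smul_sum, ← Finset.sum_add_distrib,
          ← Finset.sum_add_distrib]
        refine Finset.sum_congr rfl fun ν _ => ?_
        rw [step ν, Nat.cast_smul_eq_nsmul, Nat.cast_smul_eq_nsmul]
    _ = _ := by
        rw [h0, h1, h2, ← Nat.cast_smul_eq_nsmul ℝ, ← Nat.cast_smul_eq_nsmul ℝ]
        have hn : ((n * (n - 1) : ℕ) : ℝ) = n ^ 2 - n := by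
          rcases n with _ | m
          · simp
          · push_cast [Nat.succ_sub_one]; ring
        rw [hn]
        simp only [Polynomial.smul_eq_C_mul, map_sub, map_mul, map_pow, map_one, map_ofNat,
          Polynomial.C_eq_natCast]
        ring



/-- In a commutative semiordered real algebra with positive unit, all elements bounded,
and the cone closed on every affine line, every square is positive. -/
theorem stmt_5 {C : Type*} [CommRing C] [Algebra ℝ C]
    (Cpos : Set C)
    (hadd : ∀ x ∈ Cpos, ∀ y ∈ Cpos, x + y ∈ Cpos)
    (hsmul : ∀ (t : ℝ), 0 ≤ t → ∀ x ∈ Cpos, t • x ∈ Cpos)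
    (hanti : ∀ x : C, x ∈ Cpos → -x ∈ Cpos → x = 0)
    (hmul : ∀ x ∈ Cpos, ∀ y ∈ Cpos, x * y ∈ Cpos)
    (hone : (1 : C) ∈ Cpos)
    (hbdd : ∀ a : C, ∃ t : ℝ, 0 < t ∧ t • (1 : C) - a ∈ Cpos ∧ t • (1 : C) + a ∈ Cpos)
    (hline : ∀ a b : C, IsClosed {t : ℝ | a + t • b ∈ Cpos}) :
    ∀ b : C, b ^ 2 ∈ Cpos := by
  have h0mem : (0 : C) ∈ Cpos := by
    simpa using hsmul 0 le_rfl 1 hone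
  have hnat : ∀ m : ℕ, (m : C) ∈ Cpos := by
    intro m
    have h := hsmul (m : ℝ) (by positivity) 1 hone
    rwa [Algebra.smul_def, map_natCast, mul_one] at h
  have hpow : ∀ x ∈ Cpos, ∀ k : ℕ, x ^ k ∈ Cpos := by
    intro x hx k
    induction k with
    | zero => simpa using hone
    | succ k ih => rw [pow_succ]; exact hmul _ ih _ hx
  intro b
  obtain ⟨t, ht, hm, hp⟩ := hbdd b
  have ht' : t ≠ 0 := ne_of_gt ht
  set y : C := (2 * t)⁻¹ • (t • 1 + b) with hy
  have hyP : y ∈ Cpos := hsmul _ (by positivity) _ hp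
  have hzP : (1 : C) - y ∈ Cpos := by
    have e : (1 : C) - y = (2 * t)⁻¹ • (t • 1 - b) := by
      rw [hy]
      match_scalars <;> field_simp <;> ring
    rw [e]; exact hsmul _ (by positivity) _ hm
  have h2c : (2 : C) * y = (2 : ℝ) • y := by
    rw [Algebra.smul_def, map_ofNat]
  have hxb : t • (2 * y - 1) = b := by
    rw [h2c, hy]
    match_scalars <;> field_simp <;> ring
  -- key positivity from the Bernstein identity
  have key : ∀ n : ℕ,
      ((n : ℝ) ^ 2) • (2 * y - 1) ^ 2 + ((4 * n : ℝ)) • (y * (1 - y)) ∈ Cpos := by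
    intro n
    have hid := congrArg (Polynomial.aeval y) (bern_id n)
    simp only [map_sum, map_smul, map_add, map_mul, map_pow, map_sub, map_one, map_ofNat,
      Polynomial.aeval_X, bernsteinPolynomial, map_natCast] at hid
    rw [← hid]
    refine Finset.sum_induction _ _ (fun a c ha hc => hadd a ha c hc) h0mem ?_
    intro ν _
    refine hsmul _ (sq_nonneg _) _ ?_
    rw [mul_assoc]
    exact hmul _ (hnat _) _ (hmul _ (hpow _ hyP _) _ (hpow _ hzP _))
  obtain ⟨s, hs, _, hsx⟩ := hbdd ((2 * y - 1) ^ 2)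
  have hT : IsClosed {r : ℝ | (2 * y - 1) ^ 2 + r • (1 : C) ∈ Cpos} := hline _ _
  have hmem : ∀ n : ℕ, ((1 + s) / (n + 1)) ∈ {r : ℝ | (2 * y - 1) ^ 2 + r • (1 : C) ∈ Cpos} := by
    intro n
    have k1 := key (n + 1)
    have hnpos : (0 : ℝ) < (n : ℝ) + 1 := by positivity
    have k2 : (2 * y - 1) ^ 2 + ((4 : ℝ) / (n + 1)) • (y * (1 - y)) ∈ Cpos := by
      have h := hsmul (((n : ℝ) + 1)⁻¹ ^ 2) (by positivity) _ k1
      have e : (((n : ℝ) + 1)⁻¹ ^ 2) • (((n + 1 : ℕ) : ℝ) ^ 2 • (2 * y - 1) ^ 2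
          + ((4 * (n + 1 : ℕ) : ℝ)) • (y * (1 - y)))
          = (2 * y - 1) ^ 2 + ((4 : ℝ) / (n + 1)) • (y * (1 - y)) := by
        match_scalars <;> push_cast <;> field_simp <;> ring
      rwa [e] at h
    have k3 : ((n : ℝ) + 1)⁻¹ • (s • (1 : C) + (2 * y - 1) ^ 2) ∈ Cpos :=
      hsmul _ (by positivity) _ hsx
    have hdecomp : (2 * y - 1) ^ 2 + ((1 + s) / (n + 1)) • (1 : C)
        = ((2 * y - 1) ^ 2 + ((4 : ℝ) / (n + 1)) • (y * (1 - y)))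
          + ((n : ℝ) + 1)⁻¹ • (s • (1 : C) + (2 * y - 1) ^ 2) := by
      have hx2 : (2 * y - 1) ^ 2 = 1 - (4 : ℝ) • (y * (1 - y)) := by
        have : (4 : ℝ) • (y * (1 - y)) = 4 * (y * (1 - y)) := by
          rw [show (4 : ℝ) = ((4 : ℕ) : ℝ) by norm_num, Nat.cast_smul_eq_nsmul, nsmul_eq_mul]
          norm_num
        rw [this]; ring
      rw [hx2]
      match_scalars <;> field_simp <;> ring
    rw [Set.mem_setOf_eq, hdecomp]
    exact hadd _ k2 _ k3
  have htend : Filter.Tendsto (fun n : ℕ => (1 + s) / ((n : ℝ) + 1)) Filter.atTop (nhds 0) := by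
    have := Filter.Tendsto.comp (tendsto_const_div_atTop_nhds_zero_nat (1 + s))
      (Filter.tendsto_add_atTop_nat 1)
    simpa [Function.comp_def] using this
  have h0T : (0 : ℝ) ∈ {r : ℝ | (2 * y - 1) ^ 2 + r • (1 : C) ∈ Cpos} :=
    hT.mem_of_tendsto htend (Filter.Eventually.of_forall hmem)
  have hx2pos : (2 * y - 1) ^ 2 ∈ Cpos := by simpa using h0T
  have : b ^ 2 = (t ^ 2) • (2 * y - 1) ^ 2 := by
    rw [← hxb, _root_.smul_pow]
  rw [this]
  exact hsmul _ (by positivity) _ hx2pos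
end

section
/- Let 𝒞 be a commutative semiordered real algebra with positive unit I, all elements bounded, and 𝒞₊ ∩ L closed for every affine line L. Define ‖a‖ = inf{ t > 0 : −tI ≤ a ≤ tI }. Then ‖·‖ is a norm on 𝒞 and is submultiplicative: ‖ab‖ ≤ ‖a‖‖b‖ for all a, b ∈ 𝒞. -/
/-- Under the hypotheses of the real Gelfand–Naimark theorem,
`‖a‖ = inf { t > 0 : -tI ≤ a ≤ tI }` is a submultiplicative norm on the algebra. -/
theorem stmt_6 {C : Type*} [CommRing C] [Algebra ℝ C]
    (Cpos : Set C)
    (hadd : ∀ x ∈ Cpos, ∀ y ∈ Cpos, x + y ∈ Cpos)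
    (hsmul : ∀ (t : ℝ), 0 ≤ t → ∀ x ∈ Cpos, t • x ∈ Cpos)
    (hanti : ∀ x : C, x ∈ Cpos → -x ∈ Cpos → x = 0)
    (hmul : ∀ x ∈ Cpos, ∀ y ∈ Cpos, x * y ∈ Cpos)
    (hone : (1 : C) ∈ Cpos)
    (hbdd : ∀ a : C, ∃ t : ℝ, 0 < t ∧ t • (1 : C) - a ∈ Cpos ∧ t • (1 : C) + a ∈ Cpos)
    (hline : ∀ a b : C, IsClosed {t : ℝ | a + t • b ∈ Cpos})
    (N : C → ℝ)
    (hN : ∀ a : C, N a =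
      sInf {t : ℝ | 0 < t ∧ t • (1 : C) - a ∈ Cpos ∧ t • (1 : C) + a ∈ Cpos}) :
    (∀ a : C, 0 ≤ N a) ∧
    (∀ a : C, N a = 0 → a = 0) ∧
    (∀ (t : ℝ) (a : C), N (t • a) = |t| * N a) ∧
    (∀ a b : C, N (a + b) ≤ N a + N b) ∧
    (∀ a b : C, N (a * b) ≤ N a * N b) := by
  classical
  set S : C → Set ℝ :=
    fun a => {t : ℝ | 0 < t ∧ t • (1 : C) - a ∈ Cpos ∧ t • (1 : C) + a ∈ Cpos} with hSdef
  have hN' : ∀ a : C, N a = sInf (S a) := hN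
  have hne : ∀ a : C, (S a).Nonempty := fun a => by
    obtain ⟨t, ht, h1, h2⟩ := hbdd a; exact ⟨t, ht, h1, h2⟩
  have hbb : ∀ a : C, BddBelow (S a) := fun a => ⟨0, fun t ht => ht.1.le⟩
  have hN0 : ∀ a : C, 0 ≤ N a := fun a => by
    rw [hN' a]; exact le_csInf (hne a) fun t ht => ht.1.le
  have hle : ∀ a : C, ∀ s ∈ S a, N a ≤ s := fun a s hs => by
    rw [hN' a]; exact csInf_le (hbb a) hs
  have hup : ∀ a : C, ∀ t ∈ S a, ∀ s, t ≤ s → s ∈ S a := by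
    intro a t ht s hts
    refine ⟨lt_of_lt_of_le ht.1 hts, ?_, ?_⟩
    · have h := hadd _ (hsmul (s - t) (by linarith) 1 hone) _ ht.2.1
      have e : (s - t) • (1:C) + (t • (1:C) - a) = s • (1:C) - a := by
        rw [sub_smul]; abel
      rwa [e] at h
    · have h := hadd _ (hsmul (s - t) (by linarith) 1 hone) _ ht.2.2
      have e : (s - t) • (1:C) + (t • (1:C) + a) = s • (1:C) + a := by
        rw [sub_smul]; abel
      rwa [e] at h
  have hmem : ∀ a : C, ∀ s, N a < s → s ∈ S a := by
    intro a s hs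
    rw [hN' a] at hs
    obtain ⟨t, htS, hts⟩ := exists_lt_of_csInf_lt (hne a) hs
    exact hup a t htS s hts.le
  have hcl : ∀ a : C, N a • (1:C) - a ∈ Cpos ∧ N a • (1:C) + a ∈ Cpos := by
    intro a
    constructor
    · have hsub : Set.Ioi (N a) ⊆ {t : ℝ | -a + t • (1:C) ∈ Cpos} := by
        intro s hs
        have h := (hmem a s hs).2.1
        simpa [neg_add_eq_sub] using h
      have h1 := closure_mono hsub
      rw [closure_Ioi, (hline (-a) 1).closure_eq] at h1
      have h2 := h1 (Set.self_mem_Ici (a := N a))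
      simpa [neg_add_eq_sub] using h2
    · have hsub : Set.Ioi (N a) ⊆ {t : ℝ | a + t • (1:C) ∈ Cpos} := by
        intro s hs
        have h := (hmem a s hs).2.2
        simpa [add_comm] using h
      have h1 := closure_mono hsub
      rw [closure_Ioi, (hline a 1).closure_eq] at h1
      have h2 := h1 (Set.self_mem_Ici (a := N a))
      simpa [add_comm] using h2
  -- scaling inequality
  have hscale : ∀ (t : ℝ) (a : C), N (t • a) ≤ |t| * N a := by
    intro t a
    rcases eq_or_ne t 0 with rfl | ht
    · simp only [zero_smul, abs_zero, zero_mul]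
      apply le_of_forall_gt_imp_ge_of_dense
      intro c hc
      exact hle 0 c ⟨hc, by simpa using hsmul c hc.le 1 hone,
        by simpa using hsmul c hc.le 1 hone⟩
    · apply le_of_forall_gt_imp_ge_of_dense
      intro c hc
      have ht0 : 0 < |t| := abs_pos.2 ht
      have hc0 : 0 < c := lt_of_le_of_lt (mul_nonneg (abs_nonneg t) (hN0 a)) hc
      have hNa : N a < c / |t| := (lt_div_iff₀ ht0).2 (by linarith [mul_comm (N a) (|t|)])
      have hm := hmem a _ hNa
      apply hle
      rcases ht.lt_or_gt with htn | htp
      · have habs : |t| = -t := abs_of_neg htn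
        refine ⟨hc0, ?_, ?_⟩
        · have h := hsmul (-t) (by linarith) _ hm.2.2
          have e : (-t) • ((c / |t|) • (1:C) + a) = c • (1:C) - t • a := by
            rw [habs, smul_add, smul_smul]
            have : -t * (c / -t) = c := by field_simp
            rw [this, neg_smul]; abel
          rwa [e] at h
        · have h := hsmul (-t) (by linarith) _ hm.2.1
          have e : (-t) • ((c / |t|) • (1:C) - a) = c • (1:C) + t • a := by
            rw [habs, smul_sub, smul_smul]
            have : -t * (c / -t) = c := by field_simp
            rw [this, neg_smul]; abel
          rwa [e] at h
      · have habs : |t| = t := abs_of_pos htp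
        refine ⟨hc0, ?_, ?_⟩
        · have h := hsmul t htp.le _ hm.2.1
          have e : t • ((c / |t|) • (1:C) - a) = c • (1:C) - t • a := by
            rw [habs, smul_sub, smul_smul]
            have : t * (c / t) = c := by field_simp
            rw [this]
          rwa [e] at h
        · have h := hsmul t htp.le _ hm.2.2
          have e : t • ((c / |t|) • (1:C) + a) = c • (1:C) + t • a := by
            rw [habs, smul_add, smul_smul]
            have : t * (c / t) = c := by field_simp
            rw [this]
          rwa [e] at h
  -- sum membership
  have hSadd : ∀ (a b : C) (s r : ℝ), s ∈ S a → r ∈ S b → s + r ∈ S (a + b) := by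
    intro a b s r hs hr
    refine ⟨add_pos hs.1 hr.1, ?_, ?_⟩
    · have h := hadd _ hs.2.1 _ hr.2.1
      have e : (s • (1:C) - a) + (r • (1:C) - b) = (s + r) • (1:C) - (a + b) := by
        rw [add_smul]; abel
      rwa [e] at h
    · have h := hadd _ hs.2.2 _ hr.2.2
      have e : (s • (1:C) + a) + (r • (1:C) + b) = (s + r) • (1:C) + (a + b) := by
        rw [add_smul]; abel
      rwa [e] at h
  -- product membership
  have hSmul : ∀ (a b : C) (s r : ℝ), s ∈ S a → r ∈ S b → s * r ∈ S (a * b) := by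
    intro a b s r hs hr
    refine ⟨mul_pos hs.1 hr.1, ?_, ?_⟩
    · have T := hadd _ (hmul _ hs.2.1 _ hr.2.2) _ (hmul _ hs.2.2 _ hr.2.1)
      have e : (s * r) • (1:C) - a * b =
          (2⁻¹ : ℝ) • ((s • (1:C) - a) * (r • (1:C) + b)
            + (s • (1:C) + a) * (r • (1:C) - b)) := by
        have h2 : (s • (1:C) - a) * (r • (1:C) + b) + (s • (1:C) + a) * (r • (1:C) - b)
            = (2 : ℝ) • ((s * r) • (1:C) - a * b) := by
          simp only [Algebra.smul_def, map_mul, map_ofNat, mul_one]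
          ring
        rw [h2, smul_smul]
        norm_num
      rw [e]
      exact hsmul _ (by norm_num) _ T
    · have T := hadd _ (hmul _ hs.2.1 _ hr.2.1) _ (hmul _ hs.2.2 _ hr.2.2)
      have e : (s * r) • (1:C) + a * b =
          (2⁻¹ : ℝ) • ((s • (1:C) - a) * (r • (1:C) - b)
            + (s • (1:C) + a) * (r • (1:C) + b)) := by
        have h2 : (s • (1:C) - a) * (r • (1:C) - b) + (s • (1:C) + a) * (r • (1:C) + b)
            = (2 : ℝ) • ((s * r) • (1:C) + a * b) := by
          simp only [Algebra.smul_def, map_mul, map_ofNat, mul_one]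
          ring
        rw [h2, smul_smul]
        norm_num
      rw [e]
      exact hsmul _ (by norm_num) _ T
  refine ⟨hN0, ?_, ?_, ?_, ?_⟩
  · -- definiteness
    intro a ha
    have h1 := (hcl a).1
    have h2 := (hcl a).2
    rw [ha, zero_smul, zero_sub] at h1
    rw [ha, zero_smul, zero_add] at h2
    exact hanti a h2 h1
  · -- homogeneity
    intro t a
    rcases eq_or_ne t 0 with rfl | ht
    · have h := hscale 0 a
      simp only [zero_smul, abs_zero, zero_mul] at h ⊢
      exact le_antisymm h (hN0 0)
    · refine le_antisymm (hscale t a) ?_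
      have h2 := hscale t⁻¹ (t • a)
      rw [smul_smul, inv_mul_cancel₀ ht, one_smul, abs_inv] at h2
      have ht0 : 0 < |t| := abs_pos.2 ht
      calc |t| * N a ≤ |t| * (|t|⁻¹ * N (t • a)) :=
            mul_le_mul_of_nonneg_left h2 (abs_nonneg t)
        _ = N (t • a) := by field_simp
  · -- triangle inequality
    intro a b
    apply le_of_forall_pos_le_add
    intro ε hε
    have h1 := hmem a (N a + ε / 2) (by linarith)
    have h2 := hmem b (N b + ε / 2) (by linarith)
    have h := hle (a + b) _ (hSadd a b _ _ h1 h2)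
    linarith
  · -- submultiplicativity
    intro a b
    rcases eq_or_lt_of_le (hN0 a) with h0 | h0
    · -- N a = 0
      rw [← h0, zero_mul]
      apply le_of_forall_gt_imp_ge_of_dense
      intro c hc
      have hb1 : 0 < N b + 1 := by linarith [hN0 b]
      have hs : N a < c / (N b + 1) := by rw [← h0]; positivity
      have hr : N b < N b + 1 := by linarith
      have h := hle (a * b) _ (hSmul a b _ _ (hmem a _ hs) (hmem b _ hr))
      calc N (a * b) ≤ c / (N b + 1) * (N b + 1) := h
        _ = c := by field_simp
    · -- 0 < N a
      apply le_of_forall_gt_imp_ge_of_dense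
      intro c hc
      have hr : N b < c / N a := (lt_div_iff₀ h0).2 (by linarith [mul_comm (N a) (N b)])
      have hNaS : N a ∈ S a := ⟨h0, (hcl a).1, (hcl a).2⟩
      have h := hle (a * b) _ (hSmul a b _ _ hNaS (hmem b _ hr))
      calc N (a * b) ≤ N a * (c / N a) := h
        _ = c := by field_simp
end

section
/- Let 𝒞 be a commutative semiordered algebra with positive unit I satisfying the hypotheses of the real Gelfand–Naimark theorem, and let a ∈ 𝒞 with inf a ≤ x ≤ sup a defining the interval I_a. If a real polynomial P is nonnegative on the segment I_a = [inf a, sup a], then P(a) ∈ 𝒞₊. -/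
/-!
Squares are positive. If `1 + y` and `1 - y` are positive, so are `u = (1 + y) / 2` and `1 - u`,
hence every Bernstein basis polynomial evaluated at `u`. In the degree `n` Bernstein basis,
`(2X - 1)² + 1 / (n - 1)` has the nonnegative coefficients `(2ν - n)² / (n (n - 1))`, so
`y² + 1 / (n - 1)` is positive for all `n`, and closedness of the cone along lines gives `y² ≥ 0`.
Every element is such a `y` up to a positive scalar.

Then `P` is factored over `ℝ` by induction on its degree: a real root `α ≤ inf a` splits off
`X - α`, a real root `β ≥ sup a` splits off `β - X`, a root inside the interval is a local minimum
of `P` and hence a double root, and a non-real root splits off `(X - γ)² + δ²`. Each factor is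
positive at `a`, and the cofactor is again nonnegative on the interval, by continuity at the root.
-/

open Polynomial Set Filter

theorem bernsteinPolynomial.sum_C_mul_eq_sq_add (n : ℕ) (hn : 2 ≤ n) :
    ∑ ν ∈ Finset.range (n + 1),
        C ((2 * ν - n) ^ 2 / (n * (n - 1)) : ℝ) * bernsteinPolynomial ℝ n ν =
      (2 * X - 1) ^ 2 + C (1 / (n - 1) : ℝ) := by
  have hn0 : (n : ℝ) ≠ 0 := by positivity
  have hn1 : (n : ℝ) - 1 ≠ 0 := by
    rw [sub_ne_zero]; exact_mod_cast (by omega : n ≠ 1)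
  have hcoeff : ∀ ν : ℕ, ((2 * ν - n) ^ 2 / (n * (n - 1)) : ℝ) =
      4 / (n * (n - 1)) * ((ν * (ν - 1) : ℕ) : ℝ) - 4 / n * ν + n / (n - 1) := by
    rintro (_ | ν)
    · field_simp; ring
    · push_cast [Nat.add_sub_cancel]; field_simp; ring
  have hsum0 := bernsteinPolynomial.sum ℝ n
  have hsum1 := bernsteinPolynomial.sum_smul ℝ n
  have hsum2 := bernsteinPolynomial.sum_mul_smul ℝ n
  simp only [nsmul_eq_mul] at hsum1 hsum2
  simp only [hcoeff, C_sub, C_add, C_mul, sub_mul, add_mul, Finset.sum_add_distrib,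
    Finset.sum_sub_distrib, map_natCast, mul_assoc, ← Finset.mul_sum, hsum0, hsum1, hsum2]
  have e2 : C (4 / (n * (n - 1)) : ℝ) * ((n * (n - 1) : ℕ) : ℝ[X]) = 4 := by
    rw [← map_natCast C, ← C_mul, Nat.cast_mul, Nat.cast_pred (by omega),
      div_mul_cancel₀ _ (mul_ne_zero hn0 hn1)]
    exact map_ofNat C 4
  have e1 : C (4 / n : ℝ) * (n : ℝ[X]) = 4 := by
    rw [← map_natCast C, ← C_mul, div_mul_cancel₀ _ hn0, map_ofNat]
  have e0 : C (n / (n - 1) : ℝ) = 1 + C (1 / (n - 1) : ℝ) := by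
    rw [← C_1, ← C_add]; congr 1; field_simp; ring
  linear_combination X ^ 2 * e2 - X * e1 + e0

section

variable {A : Type*} [CommRing A] [Algebra ℝ A] (S : Subsemiring A) {m M : ℝ}

theorem aeval_bernsteinPolynomial_mem {u : A} (hu : u ∈ S) (hu' : 1 - u ∈ S) (n ν : ℕ) :
    aeval u (bernsteinPolynomial ℝ n ν) ∈ S := by
  simp only [bernsteinPolynomial, map_mul, map_pow, map_sub, aeval_X, map_one, map_natCast]
  exact S.mul_mem (S.mul_mem (natCast_mem S _) (S.pow_mem hu _)) (S.pow_mem hu' _)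

theorem mul_self_add_mem_of_one_add_mem_of_one_sub_mem
    (halg : ∀ t : ℝ, 0 ≤ t → algebraMap ℝ A t ∈ S) {y : A} (h₁ : 1 + y ∈ S) (h₂ : 1 - y ∈ S)
    (n : ℕ) : y * y + algebraMap ℝ A (1 / (n + 1)) ∈ S := by
  have htwo : algebraMap ℝ A (1 / 2) * 2 = 1 := by
    rw [← map_ofNat (algebraMap ℝ A) 2, ← map_mul]; norm_num
  set u : A := algebraMap ℝ A (1 / 2) * (1 + y)
  have hu : u ∈ S := S.mul_mem (halg _ (by norm_num)) h₁
  have hu' : 1 - u ∈ S := by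
    convert S.mul_mem (halg (1 / 2) (by norm_num)) h₂ using 1
    linear_combination -htwo
  have key := congrArg (aeval u) (bernsteinPolynomial.sum_C_mul_eq_sq_add (n + 2) (by omega))
  simp only [map_sum, map_mul, map_add, map_pow, map_sub, aeval_X, map_one,
    map_ofNat] at key
  push_cast [aeval_C] at key
  have h2u : 2 * u - 1 = y := by linear_combination (1 + y) * htwo
  rw [h2u, show (n : ℝ) + 2 - 1 = n + 1 by ring, pow_two] at key
  rw [← key]
  exact S.sum_mem fun ν _ ↦
    S.mul_mem (halg _ (by positivity)) (aeval_bernsteinPolynomial_mem S hu hu' _ _)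

theorem mul_self_mem_of_one_add_mem_of_one_sub_mem
    (halg : ∀ t : ℝ, 0 ≤ t → algebraMap ℝ A t ∈ S) {y : A} (h₁ : 1 + y ∈ S) (h₂ : 1 - y ∈ S)
    (hclosed : IsClosed {t : ℝ | y * y + algebraMap ℝ A t ∈ S}) : y * y ∈ S := by
  simpa using hclosed.mem_of_tendsto tendsto_one_div_add_atTop_nhds_zero_nat
    (Eventually.of_forall (mul_self_add_mem_of_one_add_mem_of_one_sub_mem S halg h₁ h₂))

theorem mul_self_mem (halg : ∀ t : ℝ, 0 ≤ t → algebraMap ℝ A t ∈ S)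
    (hbdd : ∀ x : A, ∃ t : ℝ, 0 < t ∧ algebraMap ℝ A t - x ∈ S ∧ algebraMap ℝ A t + x ∈ S)
    (hclosed : ∀ x : A, IsClosed {t : ℝ | x + algebraMap ℝ A t ∈ S}) (x : A) : x * x ∈ S := by
  obtain ⟨t, ht, hsub, hadd⟩ := hbdd x
  have hinv : algebraMap ℝ A t⁻¹ * algebraMap ℝ A t = 1 := by
    rw [← map_mul, inv_mul_cancel₀ ht.ne', map_one]
  set y := algebraMap ℝ A t⁻¹ * x
  have hy : y * y ∈ S := by
    refine mul_self_mem_of_one_add_mem_of_one_sub_mem S halg ?_ ?_ (hclosed _)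
    · convert S.mul_mem (halg _ (inv_nonneg.2 ht.le)) hadd using 1
      linear_combination -hinv
    · convert S.mul_mem (halg _ (inv_nonneg.2 ht.le)) hsub using 1
      linear_combination -hinv
  convert S.mul_mem (halg (t ^ 2) (sq_nonneg t)) hy using 1
  rw [map_pow]
  linear_combination (-x ^ 2 * (algebraMap ℝ A t⁻¹ * algebraMap ℝ A t + 1)) * hinv

theorem Icc_subset_closure_Icc_diff_singleton (hmM : m < M) (α : ℝ) :
    Icc m M ⊆ closure (Icc m M \ {α}) :=
  calc Icc m M = closure (Ioo m M) := (closure_Ioo hmM.ne).symm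
    _ ⊆ closure (Ioo m M ∩ {α}ᶜ) := closure_minimal
        ((dense_compl_singleton α).open_subset_closure_inter isOpen_Ioo) isClosed_closure
    _ ⊆ closure (Icc m M \ {α}) := closure_mono fun _ hx ↦ ⟨Ioo_subset_Icc_self hx.1, hx.2⟩

theorem Polynomial.eval_nonneg_of_eval_mul_nonneg (hmM : m < M) {F R : ℝ[X]} {α : ℝ}
    (hFR : ∀ x ∈ Icc m M, 0 ≤ (F * R).eval x) (hF : ∀ x ∈ Icc m M, x ≠ α → 0 < F.eval x) :
    ∀ x ∈ Icc m M, 0 ≤ R.eval x := by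
  refine fun x hx ↦ closure_minimal (fun y hy ↦ ?_) (isClosed_le continuous_const R.continuous)
    (Icc_subset_closure_Icc_diff_singleton hmM α hx)
  have := hFR y hy.1
  rw [eval_mul] at this
  exact (mul_nonneg_iff_of_pos_left (hF y hy.1 hy.2)).mp this

def IsBasicFactor (m M : ℝ) (F : ℝ[X]) : Prop :=
  (∃ α ≤ m, F = X - C α) ∨ (∃ β, M ≤ β ∧ F = C β - X) ∨ ∃ γ δ : ℝ, F = (X - C γ) ^ 2 + C (δ ^ 2)

theorem IsBasicFactor.natDegree_pos {F : ℝ[X]} (hF : IsBasicFactor m M F) : 0 < F.natDegree := by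
  rcases hF with ⟨α, -, rfl⟩ | ⟨β, -, rfl⟩ | ⟨γ, δ, rfl⟩
  · simp
  · rw [← neg_sub, natDegree_neg, natDegree_X_sub_C]; norm_num
  · rw [natDegree_add_C, natDegree_pow, natDegree_X_sub_C]; norm_num

theorem IsBasicFactor.aeval_mem (halg : ∀ t : ℝ, 0 ≤ t → algebraMap ℝ A t ∈ S)
    (hsq : ∀ x : A, x * x ∈ S) {a : A} (ham : a - algebraMap ℝ A m ∈ S)
    (hMa : algebraMap ℝ A M - a ∈ S) {F : ℝ[X]} (hF : IsBasicFactor m M F) : aeval a F ∈ S := by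
  rcases hF with ⟨α, hα, rfl⟩ | ⟨β, hβ, rfl⟩ | ⟨γ, δ, rfl⟩
  · convert S.add_mem ham (halg (m - α) (sub_nonneg.2 hα)) using 1
    simp only [map_sub, aeval_X, aeval_C]; ring
  · convert S.add_mem hMa (halg (β - M) (sub_nonneg.2 hβ)) using 1
    simp only [map_sub, aeval_X, aeval_C]; ring
  · rw [map_add, map_pow, pow_two, aeval_C]
    exact S.add_mem (hsq _) (halg _ (sq_nonneg δ))

theorem exists_isBasicFactor_mul_of_isRoot (hmM : m < M) {P : ℝ[X]} (hP0 : P ≠ 0)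
    (hP : ∀ x ∈ Icc m M, 0 ≤ P.eval x) {α : ℝ} (hα : P.IsRoot α) :
    ∃ F R, P = F * R ∧ IsBasicFactor m M F ∧ ∀ x ∈ Icc m M, 0 ≤ R.eval x := by
  obtain ⟨R, rfl⟩ := dvd_iff_isRoot.mpr hα
  rcases le_or_gt α m with hαm | hmα
  · refine ⟨_, R, rfl, Or.inl ⟨α, hαm, rfl⟩,
      eval_nonneg_of_eval_mul_nonneg (α := α) hmM hP ?_⟩
    intro x hx hxα
    simpa [sub_pos] using lt_of_le_of_ne (hαm.trans hx.1) (Ne.symm hxα)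
  rcases le_or_gt M α with hMα | hαM
  · have hneg : (X - C α) * R = (C α - X) * -R := by ring
    refine ⟨_, -R, hneg, Or.inr (Or.inl ⟨α, hMα, rfl⟩),
      eval_nonneg_of_eval_mul_nonneg (α := α) hmM (hneg ▸ hP) ?_⟩
    intro x hx hxα
    simpa [sub_pos] using lt_of_le_of_ne (hx.2.trans hMα) hxα
  have hmin : IsLocalMin (fun x ↦ ((X - C α) * R).eval x) α :=
    Filter.eventually_of_mem (Ioo_mem_nhds hmα hαM) fun x hx ↦ by
      simpa [hα.eq_zero] using hP x (Ioo_subset_Icc_self hx)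
  have hderiv : (derivative ((X - C α) * R)).IsRoot α := by
    rw [IsRoot, ← Polynomial.deriv]; exact hmin.deriv_eq_zero
  obtain ⟨Q, hQ⟩ := (le_rootMultiplicity_iff hP0).mp
    ((one_lt_rootMultiplicity_iff_isRoot hP0).mpr ⟨hα, hderiv⟩)
  refine ⟨_, Q, hQ, Or.inr (Or.inr ⟨α, 0, by simp⟩),
    eval_nonneg_of_eval_mul_nonneg (α := α) hmM (hQ ▸ hP) fun x _ hxα ↦ ?_⟩
  simpa using pow_pos (abs_pos.2 (sub_ne_zero.2 hxα)) 2

theorem exists_isBasicFactor_mul_of_aeval_eq_zero (hmM : m < M) {P : ℝ[X]}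
    (hP : ∀ x ∈ Icc m M, 0 ≤ P.eval x) {z : ℂ} (hz : aeval z P = 0) (him : z.im ≠ 0) :
    ∃ F R, P = F * R ∧ IsBasicFactor m M F ∧ ∀ x ∈ Icc m M, 0 ≤ R.eval x := by
  have hF : X ^ 2 - C (2 * z.re) * X + C (‖z‖ ^ 2) = (X - C z.re) ^ 2 + C (z.im ^ 2) := by
    rw [Complex.sq_norm, Complex.normSq_apply]
    simp only [map_add, map_mul, map_pow, map_ofNat]
    ring
  obtain ⟨R, hR⟩ := P.quadratic_dvd_of_aeval_eq_zero_im_ne_zero hz him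
  rw [hF] at hR
  refine ⟨_, R, hR, Or.inr (Or.inr ⟨_, _, rfl⟩),
    eval_nonneg_of_eval_mul_nonneg (α := m) hmM (hR ▸ hP) fun x _ _ ↦ ?_⟩
  simp only [eval_add, eval_pow, eval_sub, eval_X, eval_C]
  have := pow_pos (abs_pos.2 him) 2
  rw [sq_abs] at this
  positivity

theorem exists_isBasicFactor_mul (hmM : m < M) {P : ℝ[X]} (hP : ∀ x ∈ Icc m M, 0 ≤ P.eval x)
    (hdeg : 0 < P.natDegree) :
    ∃ F R, P = F * R ∧ IsBasicFactor m M F ∧ ∀ x ∈ Icc m M, 0 ≤ R.eval x := by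
  obtain ⟨z, hz⟩ := Complex.exists_root (f := P.map (algebraMap ℝ ℂ))
    (by rwa [degree_map, ← natDegree_pos_iff_degree_pos])
  rw [IsRoot, eval_map, ← aeval_def] at hz
  by_cases him : z.im = 0
  · refine exists_isBasicFactor_mul_of_isRoot (α := z.re) hmM (ne_zero_of_natDegree_gt hdeg) hP ?_
    rw [show z = algebraMap ℝ ℂ z.re from Complex.ext (by simp) (by simp [him]),
      aeval_algebraMap_apply_eq_algebraMap_eval] at hz
    exact (FaithfulSMul.algebraMap_eq_zero_iff ℝ ℂ).mp hz
  · exact exists_isBasicFactor_mul_of_aeval_eq_zero hmM hP hz him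

theorem aeval_mem_of_eval_nonneg (halg : ∀ t : ℝ, 0 ≤ t → algebraMap ℝ A t ∈ S)
    (hsq : ∀ x : A, x * x ∈ S) {a : A} (ham : a - algebraMap ℝ A m ∈ S)
    (hMa : algebraMap ℝ A M - a ∈ S) (hmM : m < M) (P : ℝ[X])
    (hP : ∀ x ∈ Icc m M, 0 ≤ P.eval x) : aeval a P ∈ S := by
  induction h : P.natDegree using Nat.strong_induction_on generalizing P with
  | _ n ih =>
  obtain hn | hn := n.eq_zero_or_pos
  · have hPC := eq_C_of_natDegree_eq_zero (h.trans hn)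
    have hPm := hP m ⟨le_rfl, hmM.le⟩
    rw [hPC, eval_C] at hPm
    rw [hPC, aeval_C]
    exact halg _ hPm
  obtain ⟨F, R, rfl, hF, hR⟩ := exists_isBasicFactor_mul hmM hP (h ▸ hn)
  have hFR : F * R ≠ 0 := ne_zero_of_natDegree_gt (h ▸ hn)
  have hRn : R.natDegree < n := by
    have := hF.natDegree_pos
    rw [← h, natDegree_mul (left_ne_zero_of_mul hFR) (right_ne_zero_of_mul hFR)]
    omega
  rw [map_mul]
  exact S.mul_mem (hF.aeval_mem S halg hsq ham hMa) (ih _ hRn R hR rfl)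

theorem le_of_sub_algebraMap_mem [Nontrivial A] (hanti : ∀ x : A, x ∈ S → -x ∈ S → x = 0)
    (halg : ∀ t : ℝ, 0 ≤ t → algebraMap ℝ A t ∈ S) {a : A} (ham : a - algebraMap ℝ A m ∈ S)
    (hMa : algebraMap ℝ A M - a ∈ S) : m ≤ M := by
  by_contra! hMm
  have h0 : algebraMap ℝ A (M - m) = 0 := by
    refine hanti _ ?_ ?_
    · convert S.add_mem ham hMa using 1; rw [map_sub]; ring
    · rw [← map_neg, neg_sub]; exact halg _ (by linarith)
  rw [map_eq_zero_iff _ (algebraMap ℝ A).injective, sub_eq_zero] at h0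
  linarith

end

/-- If a real polynomial `P` is nonnegative on the segment `[inf a, sup a]`, then
`P(a)` is a positive element of the semiordered algebra. -/
theorem stmt_7 {C : Type*} [CommRing C] [Algebra ℝ C]
    (Cpos : Set C)
    (hadd : ∀ x ∈ Cpos, ∀ y ∈ Cpos, x + y ∈ Cpos)
    (hsmul : ∀ (t : ℝ), 0 ≤ t → ∀ x ∈ Cpos, t • x ∈ Cpos)
    (hanti : ∀ x : C, x ∈ Cpos → -x ∈ Cpos → x = 0)
    (hmul : ∀ x ∈ Cpos, ∀ y ∈ Cpos, x * y ∈ Cpos)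
    (hone : (1 : C) ∈ Cpos)
    (hbdd : ∀ a : C, ∃ t : ℝ, 0 < t ∧ t • (1 : C) - a ∈ Cpos ∧ t • (1 : C) + a ∈ Cpos)
    (hline : ∀ a b : C, IsClosed {t : ℝ | a + t • b ∈ Cpos})
    (a : C) (m M : ℝ)
    (hm : IsGreatest {t : ℝ | a - t • (1 : C) ∈ Cpos} m)
    (hM : IsLeast {t : ℝ | t • (1 : C) - a ∈ Cpos} M)
    (P : Polynomial ℝ)
    (hP : ∀ x ∈ Set.Icc m M, 0 ≤ P.eval x) :
    Polynomial.aeval a P ∈ Cpos := by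
  let S : Subsemiring C :=
    { carrier := Cpos
      mul_mem' := fun hx hy ↦ hmul _ hx _ hy
      one_mem' := hone
      add_mem' := fun hx hy ↦ hadd _ hx _ hy
      zero_mem' := by simpa using hsmul 0 le_rfl 1 hone }
  change aeval a P ∈ S
  rcases subsingleton_or_nontrivial C with hC | hC
  · exact Subsingleton.elim (1 : C) (aeval a P) ▸ S.one_mem
  simp only [← Algebra.algebraMap_eq_smul_one] at hbdd hm hM
  have halg : ∀ t : ℝ, 0 ≤ t → algebraMap ℝ C t ∈ S := fun t ht ↦ by
    rw [Algebra.algebraMap_eq_smul_one]; exact hsmul t ht 1 hone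
  have hsq : ∀ x : C, x * x ∈ S := mul_self_mem S halg hbdd fun x ↦ by
    simp only [Algebra.algebraMap_eq_smul_one]; exact hline x 1
  rcases (le_of_sub_algebraMap_mem S hanti halg hm.1 hM.1).lt_or_eq with hmM | rfl
  · exact aeval_mem_of_eval_nonneg S halg hsq hm.1 hM.1 hmM P hP
  · have ha : a = algebraMap ℝ C m := sub_eq_zero.mp (hanti _ hm.1 (by rw [neg_sub]; exact hM.1))
    rw [ha, aeval_algebraMap_apply_eq_algebraMap_eval]
    exact halg _ (hP m ⟨le_rfl, le_rfl⟩)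
end

section
/- Let L be a real normed vector space semiordered by a cone K such that the norm is monotone (‖u‖ ≤ ‖u+v‖ for all u, v ∈ K). Then for every v ∈ K there exists a continuous linear functional ν : L → ℝ that is nonnegative on K, has norm ‖ν‖ = 1, and satisfies ν(v) = ‖v‖. -/
/-!
The open ball `B(0, ‖v‖)` is disjoint from the convex set `v + K`, since by monotonicity every
`v + k` with `k ∈ K` has norm at least `‖v‖`. Hahn–Banach separates the two sets by a functional,
which after normalisation has norm one, is at least `‖v‖` on `v + K` and hence equals `‖v‖` at `v`.
Being bounded below along every ray `v + t • u` with `u ∈ K`, it is nonnegative on `K`.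
-/

open Metric Set
open scoped Pointwise

lemma nonneg_of_forall_le_add_mul {s a b : ℝ} (h : ∀ t : ℝ, 0 ≤ t → s ≤ a + t * b) : 0 ≤ b := by
  by_contra! hb
  have := h ((a - s + 1) / -b) (div_nonneg (by linarith [h 0 le_rfl]) (by linarith))
  rw [div_mul_eq_mul_div, div_neg, mul_div_assoc, div_self hb.ne, mul_one] at this
  linarith

namespace ContinuousLinearMap

variable {E : Type*} [NormedAddCommGroup E] [NormedSpace ℝ E]

lemma opNorm_le_div_of_forall_ball_lt (f : StrongDual ℝ E) {r s : ℝ} (hr : 0 < r)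
    (hf : ∀ x ∈ ball (0 : E) r, f x < s) : ‖f‖ ≤ s / r := by
  have hle : ∀ x ∈ closedBall (0 : E) r, f x ≤ s := by
    rw [← closure_ball 0 hr.ne']
    exact fun x hx ↦ closure_lt_subset_le f.continuous continuous_const
      (closure_mono hf hx)
  refine opNorm_bound_of_ball_bound hr s f fun x hx ↦ abs_le.2 ⟨?_, hle x hx⟩
  have := hle (-x) (by simpa using hx)
  rw [map_neg] at this
  linarith

lemma exists_norm_eq_one_apply_eq_norm_of_disjoint_ball {T : Set E} (hT : Convex ℝ T) {v : E}
    (hvT : v ∈ T) (hv0 : v ≠ 0) (hdisj : Disjoint (ball 0 ‖v‖) T) :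
    ∃ ν : StrongDual ℝ E, ‖ν‖ = 1 ∧ ν v = ‖v‖ ∧ ∀ x ∈ T, ‖v‖ ≤ ν x := by
  obtain ⟨f, s, hf_ball, hf_T⟩ :=
    geometric_hahn_banach_open (convex_ball 0 ‖v‖) isOpen_ball hT hdisj
  have hv : 0 < ‖v‖ := norm_pos_iff.2 hv0
  have hs : 0 < s := by simpa using hf_ball 0 (mem_ball_self hv)
  have hf_norm : ‖f‖ ≤ s / ‖v‖ := f.opNorm_le_div_of_forall_ball_lt hv hf_ball
  have hf0 : f ≠ 0 := by
    rintro rfl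
    exact hs.not_ge (hf_T v hvT)
  have hf_norm_pos : 0 < ‖f‖ := norm_pos_iff.2 hf0
  have hT_bound : ∀ x ∈ T, ‖v‖ ≤ (‖f‖⁻¹ • f) x := fun x hx ↦ by
    rw [smul_apply, smul_eq_mul, ← div_eq_inv_mul, le_div_iff₀ hf_norm_pos]
    calc ‖v‖ * ‖f‖ ≤ s := by rwa [le_div_iff₀' hv] at hf_norm
      _ ≤ f x := hf_T x hx
  have hν : ‖‖f‖⁻¹ • f‖ = 1 := norm_smul_inv_norm hf0
  refine ⟨‖f‖⁻¹ • f, hν, le_antisymm ?_ (hT_bound v hvT), hT_bound⟩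
  simpa [hν] using ((‖f‖⁻¹ • f).le_opNorm v).trans' (le_abs_self _)

end ContinuousLinearMap

theorem stmt_10_general {L : Type*} [NormedAddCommGroup L] [NormedSpace ℝ L]
    (K : Set L)
    (hconv : Convex ℝ K)
    (hsmul : ∀ (t : ℝ), 0 ≤ t → ∀ v ∈ K, t • v ∈ K)
    (hmono : ∀ u ∈ K, ∀ v ∈ K, ‖u‖ ≤ ‖u + v‖)
    (v : L) (hv : v ∈ K) (hv0 : v ≠ 0) :
    ∃ ν : L →L[ℝ] ℝ, (∀ u ∈ K, 0 ≤ ν u) ∧ ‖ν‖ = 1 ∧ ν v = ‖v‖ := by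
  have hvK : v ∈ v +ᵥ K := ⟨0, by simpa using hsmul 0 le_rfl v hv, add_zero v⟩
  have hdisj : Disjoint (ball 0 ‖v‖) (v +ᵥ K) := by
    refine disjoint_left.2 ?_
    rintro _ hx ⟨k, hk, rfl⟩
    exact (mem_ball_zero_iff.1 hx).not_ge (hmono v hv k hk)
  obtain ⟨ν, hν_norm, hν_v, hν_ge⟩ :=
    ContinuousLinearMap.exists_norm_eq_one_apply_eq_norm_of_disjoint_ball
      (hconv.vadd v) hvK hv0 hdisj
  refine ⟨ν, fun u hu ↦
    nonneg_of_forall_le_add_mul (s := ‖v‖) (a := ν v) fun t ht ↦ ?_, hν_norm, hν_v⟩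
  simpa using hν_ge (v + t • u) ⟨t • u, hsmul t ht u hu, rfl⟩

/-- In a positive space (normed space semiordered by a cone with monotone norm), every
nonzero positive vector `v` admits a positive continuous linear functional of norm one
attaining `ν(v) = ‖v‖`. -/
theorem stmt_10 {L : Type*} [NormedAddCommGroup L] [NormedSpace ℝ L]
    (K : Set L)
    (hconv : Convex ℝ K)
    (hsmul : ∀ (t : ℝ), 0 ≤ t → ∀ v ∈ K, t • v ∈ K)
    (hanti : ∀ v : L, v ∈ K → -v ∈ K → v = 0)
    (hmono : ∀ u ∈ K, ∀ v ∈ K, ‖u‖ ≤ ‖u + v‖)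
    (v : L) (hv : v ∈ K) (hv0 : v ≠ 0) :
    ∃ ν : L →L[ℝ] ℝ, (∀ u ∈ K, 0 ≤ ν u) ∧ ‖ν‖ = 1 ∧ ν v = ‖v‖ :=
  stmt_10_general K hconv hsmul hmono v hv hv0
end

section
/- Let L be a semiordered normed vector space, 𝒜₊ the set of positive bounded linear operators on L (those mapping the cone into itself), and 𝒜 = { A − B : A, B ∈ 𝒜₊ } its linear span. Define |A| = inf{ ‖A′‖ : A′ ∈ 𝒜, −A′ ≤ A ≤ A′ } (where ≤ is the order induced by 𝒜₊). Then |·| is a submultiplicative seminorm on the algebra 𝒜: |A+B| ≤ |A|+|B|, |tA| = |t||A|, and |AB| ≤ |A||B|. -/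
/-- On the linear span of the positive operators on a semiordered normed space,
`|A| = inf { ‖A'‖ : -A' ≤ A ≤ A' }` is a submultiplicative seminorm. -/
theorem stmt_11 {L : Type*} [NormedAddCommGroup L] [NormedSpace ℝ L]
    (K : Set L)
    (hconv : Convex ℝ K)
    (hsmul : ∀ (t : ℝ), 0 ≤ t → ∀ v ∈ K, t • v ∈ K)
    (hanti : ∀ v : L, v ∈ K → -v ∈ K → v = 0)
    (Pos : (L →L[ℝ] L) → Prop)
    (hPos : ∀ A : L →L[ℝ] L, Pos A ↔ ∀ x ∈ K, A x ∈ K)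
    (p : (L →L[ℝ] L) → ℝ)
    (hp : ∀ A : L →L[ℝ] L,
      p A = sInf {r : ℝ | ∃ A' : L →L[ℝ] L, Pos (A' - A) ∧ Pos (A' + A) ∧ r = ‖A'‖}) :
    ∀ A B : L →L[ℝ] L,
      (∃ A₁ A₂, Pos A₁ ∧ Pos A₂ ∧ A = A₁ - A₂) →
      (∃ B₁ B₂, Pos B₁ ∧ Pos B₂ ∧ B = B₁ - B₂) →
      p (A + B) ≤ p A + p B ∧ (∀ t : ℝ, p (t • A) = |t| * p A) ∧
        p (A * B) ≤ p A * p B := by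
  -- K is closed under addition
  have addK : ∀ u ∈ K, ∀ v ∈ K, u + v ∈ K := by
    intro u hu v hv
    have h := hconv hu hv (by norm_num : (0:ℝ) ≤ 1/2) (by norm_num : (0:ℝ) ≤ 1/2)
      (by norm_num)
    have h2 := hsmul 2 (by norm_num) _ h
    have : (2:ℝ) • ((1/2:ℝ) • u + (1/2:ℝ) • v) = u + v := by
      rw [smul_add, smul_smul, smul_smul]; norm_num
    rwa [this] at h2
  -- basic Pos lemmas
  have posAdd : ∀ P Q, Pos P → Pos Q → Pos (P + Q) := by
    intro P Q hP hQ
    rw [hPos]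
    intro x hx
    simpa using addK _ ((hPos P).1 hP x hx) _ ((hPos Q).1 hQ x hx)
  have posSmul : ∀ (t : ℝ), 0 ≤ t → ∀ P, Pos P → Pos (t • P) := by
    intro t ht P hP
    rw [hPos]
    intro x hx
    simpa using hsmul t ht _ ((hPos P).1 hP x hx)
  have posMul : ∀ P Q, Pos P → Pos Q → Pos (P * Q) := by
    intro P Q hP hQ
    rw [hPos]
    intro x hx
    simpa [ContinuousLinearMap.mul_apply] using
      (hPos P).1 hP _ ((hPos Q).1 hQ x hx)
  have posHalf : ∀ C, Pos ((2:ℝ) • C) → Pos C := by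
    intro C hC
    rw [hPos]
    intro x hx
    have := hsmul (1/2) (by norm_num) _ ((hPos _).1 hC x hx)
    simpa [smul_smul] using this
  have pos0 : Pos (0 : L →L[ℝ] L) := by
    rw [hPos]
    intro x hx
    simpa using hsmul 0 le_rfl x hx
  -- the defining set
  set S : (L →L[ℝ] L) → Set ℝ :=
    fun C => {r : ℝ | ∃ A' : L →L[ℝ] L, Pos (A' - C) ∧ Pos (A' + C) ∧ r = ‖A'‖} with hS
  have hpS : ∀ C, p C = sInf (S C) := hp
  have bdd : ∀ C, BddBelow (S C) := by
    rintro C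
    exact ⟨0, by rintro r ⟨A', -, -, rfl⟩; exact norm_nonneg _⟩
  have memS : ∀ C A', Pos (A' - C) → Pos (A' + C) → ‖A'‖ ∈ S C := by
    intro C A' h1 h2; exact ⟨A', h1, h2, rfl⟩
  have memle : ∀ C A', Pos (A' - C) → Pos (A' + C) → p C ≤ ‖A'‖ := by
    intro C A' h1 h2
    rw [hpS]
    exact csInf_le (bdd C) (memS C A' h1 h2)
  have pnonneg : ∀ C, (S C).Nonempty → 0 ≤ p C := by
    intro C hne
    rw [hpS]
    exact le_csInf hne (by rintro r ⟨A', -, -, rfl⟩; exact norm_nonneg _)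
  have pleS : ∀ C, ∀ a ∈ S C, p C ≤ a := by
    rintro C a ⟨A', h1, h2, rfl⟩
    exact memle C A' h1 h2
  -- nonemptiness from span membership
  have hNE : ∀ C C₁ C₂, Pos C₁ → Pos C₂ → C = C₁ - C₂ → (S C).Nonempty := by
    rintro C C₁ C₂ h1 h2 rfl
    refine ⟨‖C₁ + C₂‖, C₁ + C₂, ?_, ?_, rfl⟩
    · have : C₁ + C₂ - (C₁ - C₂) = C₂ + C₂ := by abel
      rw [this]; exact posAdd _ _ h2 h2
    · have : C₁ + C₂ + (C₁ - C₂) = C₁ + C₁ := by abel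
      rw [this]; exact posAdd _ _ h1 h1
  intro A B hA hB
  obtain ⟨A₁, A₂, hA₁, hA₂, hAeq⟩ := hA
  obtain ⟨B₁, B₂, hB₁, hB₂, hBeq⟩ := hB
  have hSA : (S A).Nonempty := hNE A A₁ A₂ hA₁ hA₂ hAeq
  have hSB : (S B).Nonempty := hNE B B₁ B₂ hB₁ hB₂ hBeq
  -- subadditivity
  have key : ∀ a ∈ S A, ∀ b ∈ S B, p (A + B) ≤ a + b := by
    rintro a ⟨A', hA'1, hA'2, rfl⟩ b ⟨B', hB'1, hB'2, rfl⟩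
    have h1 : Pos (A' + B' - (A + B)) := by
      have e : A' + B' - (A + B) = (A' - A) + (B' - B) := by abel
      rw [e]; exact posAdd _ _ hA'1 hB'1
    have h2 : Pos (A' + B' + (A + B)) := by
      have e : A' + B' + (A + B) = (A' + A) + (B' + B) := by abel
      rw [e]; exact posAdd _ _ hA'2 hB'2
    exact (memle _ _ h1 h2).trans (norm_add_le _ _)
  have hadd : p (A + B) ≤ p A + p B := by
    have h1 : ∀ b ∈ S B, p (A + B) - b ≤ sInf (S A) :=
      fun b hb => le_csInf hSA (fun a ha => by linarith [key a ha b hb])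
    have h2 : p (A + B) - sInf (S A) ≤ sInf (S B) :=
      le_csInf hSB (fun b hb => by linarith [h1 b hb])
    rw [hpS A, hpS B]; linarith
  -- scaling of witnesses
  have hscale : ∀ (t : ℝ) (C A' : L →L[ℝ] L), Pos (A' - C) → Pos (A' + C) →
      Pos (|t| • A' - t • C) ∧ Pos (|t| • A' + t • C) := by
    intro t C A' h1 h2
    rcases le_or_gt 0 t with ht | ht
    · rw [abs_of_nonneg ht]
      constructor
      · rw [← smul_sub]; exact posSmul t ht _ h1
      · rw [← smul_add]; exact posSmul t ht _ h2
    · rw [abs_of_neg ht]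
      have hnt : (0:ℝ) ≤ -t := by linarith
      constructor
      · have e : (-t) • A' - t • C = (-t) • (A' + C) := by module
        rw [e]; exact posSmul _ hnt _ h2
      · have e : (-t) • A' + t • C = (-t) • (A' - C) := by module
        rw [e]; exact posSmul _ hnt _ h1
  have hmul_mem : ∀ (t : ℝ) (C : L →L[ℝ] L), ∀ a ∈ S C, |t| * a ∈ S (t • C) := by
    rintro t C a ⟨A', h1, h2, rfl⟩
    obtain ⟨g1, g2⟩ := hscale t C A' h1 h2
    exact ⟨|t| • A', g1, g2, by rw [norm_smul |t| A', Real.norm_eq_abs, abs_abs]⟩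
  -- homogeneity
  have hsm : ∀ t : ℝ, p (t • A) = |t| * p A := by
    intro t
    rcases eq_or_ne t 0 with rfl | ht
    · simp only [zero_smul, abs_zero, zero_mul]
      have h1 : p (0 : L →L[ℝ] L) ≤ ‖(0 : L →L[ℝ] L)‖ := by
        apply memle
        · simpa using pos0
        · simpa using pos0
      have h2 : 0 ≤ p (0 : L →L[ℝ] L) :=
        pnonneg _ ⟨‖(0 : L →L[ℝ] L)‖, 0, by simpa using pos0, by simpa using pos0, rfl⟩
      simp only [norm_zero] at h1
      linarith
    · have habs : 0 < |t| := abs_pos.mpr ht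
      have hle1 : p (t • A) ≤ |t| * p A := by
        have : ∀ a ∈ S A, p (t • A) / |t| ≤ a := by
          intro a ha
          have := pleS _ _ (hmul_mem t A a ha)
          rw [div_le_iff₀ habs] at *
          linarith [this]
        have h := le_csInf hSA this
        rw [div_le_iff₀ habs] at h
        rw [hpS A]
        linarith [h]
      have hStA : (S (t • A)).Nonempty := by
        obtain ⟨a, ha⟩ := hSA
        exact ⟨|t| * a, hmul_mem t A a ha⟩
      have hle2 : p A ≤ |t|⁻¹ * p (t • A) := by
        have h := by
          have : ∀ a ∈ S (t • A), p (t⁻¹ • (t • A)) / |t⁻¹| ≤ a := by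
            intro a ha
            have habs' : 0 < |t⁻¹| := by positivity
            have := pleS _ _ (hmul_mem t⁻¹ (t • A) a ha)
            rw [div_le_iff₀ habs']
            linarith [this]
          exact le_csInf hStA this
        have habs' : 0 < |t⁻¹| := by positivity
        rw [div_le_iff₀ habs'] at h
        have e : t⁻¹ • (t • A) = A := by
          rw [smul_smul, inv_mul_cancel₀ ht, one_smul]
        rw [e] at h
        calc p A ≤ sInf (S (t • A)) * |t⁻¹| := h
          _ = |t|⁻¹ * sInf (S (t • A)) := by rw [abs_inv, mul_comm]
          _ = |t|⁻¹ * p (t • A) := by rw [hpS]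
      have h3 : |t| * p A ≤ |t| * (|t|⁻¹ * p (t • A)) :=
        mul_le_mul_of_nonneg_left hle2 habs.le
      rw [← mul_assoc, mul_inv_cancel₀ (ne_of_gt habs), one_mul] at h3
      linarith
  -- submultiplicativity
  have hABne : (S (A * B)).Nonempty := by
    obtain ⟨a, A', hA'1, hA'2, rfl⟩ := hSA
    obtain ⟨b, B', hB'1, hB'2, rfl⟩ := hSB
    refine ⟨‖A' * B'‖, A' * B', ?_, ?_, rfl⟩
    · apply posHalf
      have e : (2:ℝ) • (A' * B' - A * B) = (A' - A) * (B' + B) + (A' + A) * (B' - B) := by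
        rw [two_smul]; noncomm_ring
      rw [e]
      exact posAdd _ _ (posMul _ _ hA'1 hB'2) (posMul _ _ hA'2 hB'1)
    · apply posHalf
      have e : (2:ℝ) • (A' * B' + A * B) = (A' - A) * (B' - B) + (A' + A) * (B' + B) := by
        rw [two_smul]; noncomm_ring
      rw [e]
      exact posAdd _ _ (posMul _ _ hA'1 hB'1) (posMul _ _ hA'2 hB'2)
  have keym : ∀ a ∈ S A, ∀ b ∈ S B, p (A * B) ≤ a * b := by
    rintro a ⟨A', hA'1, hA'2, rfl⟩ b ⟨B', hB'1, hB'2, rfl⟩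
    have h1 : Pos (A' * B' - A * B) := by
      apply posHalf
      have e : (2:ℝ) • (A' * B' - A * B) = (A' - A) * (B' + B) + (A' + A) * (B' - B) := by
        rw [two_smul]; noncomm_ring
      rw [e]
      exact posAdd _ _ (posMul _ _ hA'1 hB'2) (posMul _ _ hA'2 hB'1)
    have h2 : Pos (A' * B' + A * B) := by
      apply posHalf
      have e : (2:ℝ) • (A' * B' + A * B) = (A' - A) * (B' - B) + (A' + A) * (B' + B) := by
        rw [two_smul]; noncomm_ring
      rw [e]
      exact posAdd _ _ (posMul _ _ hA'1 hB'1) (posMul _ _ hA'2 hB'2)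
    exact (memle _ _ h1 h2).trans (ContinuousLinearMap.opNorm_comp_le _ _)
  have hanneg : ∀ a ∈ S A, 0 ≤ a := by rintro a ⟨A', -, -, rfl⟩; exact norm_nonneg _
  have hbneg : ∀ b ∈ S B, 0 ≤ b := by rintro b ⟨B', -, -, rfl⟩; exact norm_nonneg _
  have pBnn : 0 ≤ p B := pnonneg B hSB
  have step1 : ∀ a ∈ S A, p (A * B) ≤ a * p B := by
    intro a ha
    rcases eq_or_lt_of_le (hanneg a ha) with h0 | hpos
    · obtain ⟨b, hb⟩ := hSB
      have := keym a ha b hb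
      rw [← h0] at this ⊢
      simpa using this
    · have : ∀ b ∈ S B, p (A * B) / a ≤ b := by
        intro b hb
        rw [div_le_iff₀ hpos]
        calc p (A * B) ≤ a * b := keym a ha b hb
          _ = b * a := mul_comm _ _
      have h := le_csInf hSB this
      rw [div_le_iff₀ hpos, hpS B] at *
      calc p (A * B) ≤ sInf (S B) * a := h
        _ = a * sInf (S B) := mul_comm _ _
  have hmulle : p (A * B) ≤ p A * p B := by
    rcases eq_or_lt_of_le pBnn with h0 | hpos
    · obtain ⟨a, ha⟩ := hSA
      have := step1 a ha
      rw [← h0] at this ⊢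
      simpa using this
    · have : ∀ a ∈ S A, p (A * B) / p B ≤ a := by
        intro a ha
        rw [div_le_iff₀ hpos]
        exact step1 a ha
      have h := le_csInf hSA this
      rw [div_le_iff₀ hpos] at h
      rw [hpS A]
      exact h
  exact ⟨hadd, hsm, hmulle⟩
end
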